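/- Let f be a Boolean network of dimension n and x ∈ 𝔹^n. Suppose z ∈ P^n is reachable from x under the most permissive semantics, every component in which z differs from x holds a dynamic state (↗ or ↘), and no transition z →_f z' exists changing a component from a Boolean state to a dynamic state. Then every binary configuration reachable from x under the most permissive semantics lies in γ(z). -/
import Mathlib


inductive PState : Type
  | zero | up | down | one
deriving DecidableEq

def PState.ofBool : Bool → PState
  | false => .zero
  | true  => .one

def PState.isBool (p : PState) : Prop := p = .zero ∨ p = .one

abbrev BN (n : ℕ) := (Fin n → Bool) → Fin n → Bool

def gamma {n : ℕ} (x : Fin n → PState) : Set (Fin n → Bool) :=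
  {b | ∀ i (v : Bool), x i = PState.ofBool v → b i = v}

def mpStep {n : ℕ} (f : BN n) (x y : Fin n → PState) : Prop :=
  ∃ i : Fin n, x i ≠ y i ∧ (∀ j, j ≠ i → x j = y j) ∧
    ((y i = .up ∧ x i ≠ .one ∧ ∃ z ∈ gamma x, f z i = true) ∨
     (y i = .one ∧ x i = .up) ∨
     (y i = .down ∧ x i ≠ .zero ∧ ∃ z ∈ gamma x, f z i = false) ∨
     (y i = .zero ∧ x i = .down))

def mpReachP {n : ℕ} (f : BN n) : (Fin n → PState) → (Fin n → PState) → Prop :=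
  Relation.ReflTransGen (mpStep f)

def embed {n : ℕ} (x : Fin n → Bool) : Fin n → PState := fun i => PState.ofBool (x i)

def mpReach {n : ℕ} (f : BN n) (x : Fin n → Bool) : Set (Fin n → Bool) :=
  {y | mpReachP f (embed x) (embed y)}

def cubeSet {n : ℕ} (h : Fin n → Option Bool) : Set (Fin n → Bool) :=
  {z | ∀ i b, h i = some b → z i = b}

def smaller {n : ℕ} (h h' : Fin n → Option Bool) : Prop :=
  ∀ i b, h' i = some b → h i = some b

def kClosed {n : ℕ} (f : BN n) (K : Finset (Fin n)) (h : Fin n → Option Bool) : Prop :=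
  ∀ z ∈ cubeSet h, ∀ i ∈ K, h i = none ∨ h i = some (f z i)

def closedBy {n : ℕ} (f : BN n) (h : Fin n → Option Bool) : Prop :=
  ∀ z ∈ cubeSet h, f z ∈ cubeSet h

def smallestClosed {n : ℕ} (f : BN n) (x : Fin n → Bool) (h : Fin n → Option Bool) : Prop :=
  x ∈ cubeSet h ∧ closedBy f h ∧
    ∀ h', x ∈ cubeSet h' → closedBy f h' → smaller h h'

def minClosed {n : ℕ} (f : BN n) (h : Fin n → Option Bool) : Prop :=
  closedBy f h ∧ ∀ h', closedBy f h' → smaller h' h → h' = h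

def faStep {n : ℕ} (f : BN n) (x y : Fin n → Bool) : Prop :=
  ∃ i : Fin n, x i ≠ y i ∧ (∀ j, j ≠ i → x j = y j) ∧ y i = f x i

def aStep {n : ℕ} (f : BN n) (x y : Fin n → Bool) : Prop :=
  x ≠ y ∧ ∀ i, x i ≠ y i → y i = f x i

def mnStep {n m : ℕ} (F : (Fin n → Fin (m+1)) → Fin n → ℤ)
    (x y : Fin n → Fin (m+1)) : Prop :=
  x ≠ y ∧ ∀ i, x i ≠ y i → ((y i : ℤ) = (x i : ℤ) + F x i)

def beta {n m : ℕ} (x : Fin n → Fin (m+1)) : Set (Fin n → Bool) :=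
  {b | ∀ i, ((x i : ℕ) = 0 → b i = false) ∧ ((x i : ℕ) = m → b i = true)}

def refines {n m : ℕ} (F : (Fin n → Fin (m+1)) → Fin n → ℤ) (f : BN n) : Prop :=
  ∀ x i, (F x i > 0 → ∃ b ∈ beta x, f b i = true) ∧
         (F x i < 0 → ∃ b ∈ beta x, f b i = false)

def alpha {n m : ℕ} (x : Fin n → Fin (m+1)) : Set (Fin n → PState) :=
  {p | ∀ i, ((x i : ℕ) = 0 ↔ p i = .zero) ∧ ((x i : ℕ) = m ↔ p i = .one)}

def bdStep {n : ℕ} (f : BN n) (L : Finset (Fin n)) (a b : Fin n → PState) : Prop :=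
  mpStep f a b ∧ ∃ j, a j ≠ b j ∧ j ∉ L ∧ (a j).isBool ∧ ¬ (b j).isBool

def exhaustive {n : ℕ} (f : BN n) (x : Fin n → Bool) (L : Finset (Fin n))
    (zhat : Fin n → PState) : Prop :=
  Relation.ReflTransGen (bdStep f L) (embed x) zhat ∧ ∀ z', ¬ bdStep f L zhat z'

theorem stmt2 {n : ℕ} (f : BN n) (x : Fin n → Bool) (z : Fin n → PState)
    (hreach : mpReachP f (embed x) z)
    (hdyn : ∀ i, embed x i ≠ z i → ¬ (z i).isBool)
    (hmax : ∀ z', ¬ (mpStep f z z' ∧ ∃ j, z j ≠ z' j ∧ (z j).isBool ∧ ¬ (z' j).isBool)) :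
    mpReach f x ⊆ gamma z := by
  -- key invariant: every reachable configuration agrees with z on Boolean components of z
  have key : ∀ w, mpReachP f (embed x) w → ∀ i, (z i).isBool → w i = z i := by
    intro w hw
    induction hw with
    | refl =>
      intro i hb
      by_contra h
      exact hdyn i h hb
    | @tail b c _ hstep ih =>
      intro i hb
      obtain ⟨j, hne, hoth, hcases⟩ := hstep
      rcases eq_or_ne i j with rfl | hij
      · exfalso
        have hbi : b i = z i := ih i hb
        have hsub : ∀ w' ∈ gamma b, w' ∈ gamma z := by
          intro w' hw' k v hk
          have hkb : (z k).isBool := by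
            rw [hk]; cases v <;> [exact Or.inl rfl; exact Or.inr rfl]
          have : b k = z k := ih k hkb
          exact hw' k v (this.trans hk)
        rcases hb with h0 | h1
        · -- z i = zero, so b i = zero; only transition is to up with a witness
          rcases hcases with ⟨hc, _, w', hw', hf⟩ | ⟨_, hbup⟩ | ⟨_, hbne, _⟩ | ⟨_, hbd⟩
          · refine hmax (Function.update z i .up) ⟨⟨i, ?_, ?_, ?_⟩, i, ?_, Or.inl h0, ?_⟩
            · rw [Function.update_self, h0]; simp
            · intro k hk; rw [Function.update_of_ne hk]
            · exact Or.inl ⟨Function.update_self .., by rw [h0]; simp,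
                w', hsub w' hw', hf⟩
            · rw [Function.update_self, h0]; simp
            · rw [Function.update_self]
              rintro (h | h) <;> simp at h
          · rw [hbi, h0] at hbup; simp at hbup
          · rw [hbi] at hbne; exact hbne h0
          · rw [hbi, h0] at hbd; simp at hbd
        · -- z i = one; only transition is to down with a witness
          rcases hcases with ⟨_, hbne, _⟩ | ⟨_, hbup⟩ | ⟨hc, _, w', hw', hf⟩ | ⟨_, hbd⟩
          · rw [hbi] at hbne; exact hbne h1
          · rw [hbi, h1] at hbup; simp at hbup
          · refine hmax (Function.update z i .down) ⟨⟨i, ?_, ?_, ?_⟩, i, ?_, Or.inr h1, ?_⟩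
            · rw [Function.update_self, h1]; simp
            · intro k hk; rw [Function.update_of_ne hk]
            · exact Or.inr (Or.inr (Or.inl ⟨Function.update_self .., by rw [h1]; simp,
                w', hsub w' hw', hf⟩))
            · rw [Function.update_self, h1]; simp
            · rw [Function.update_self]
              rintro (h | h) <;> simp at h
          · rw [hbi, h1] at hbd; simp at hbd
      · rw [← hoth i hij]; exact ih i hb
  intro y hy i v hv
  have hb : (z i).isBool := by
    rw [hv]; cases v <;> [exact Or.inl rfl; exact Or.inr rfl]
  have := key (embed y) hy i hb
  rw [hv] at this
  cases v <;> cases hyi : y i <;> simp [embed, PState.ofBool, hyi] at this ⊢ <;>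
    simp [PState.ofBool] at this <;> try exact this
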